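/- arXiv:2209.13812 — 6 statements merged into one kernel-verified Lean document; each statement's English description precedes it below -/
import Mathlib

section
/- Let D ≥ 1 and let Q, Q^e : ℕ → ℝ, A : ℕ → ℝ≥0, F : ℕ → ℝ≥0 satisfy: Q(D) = Q^e(0) + ∑_{τ=0}^{D-1} A(τ); for all t ≥ D, Q(t+1) = max(0, Q(t) + A(t) − F(t)) and Q^e(t−D+1) = Q^e(t−D) + A(t−D) − F(t), with Q^e(t−D+1) ≥ 0. Then for all t ≥ D, Q(t) = Q^e(t−D) + ∑_{τ=t−D}^{t−1} A(τ). -/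
/-! The emulated queue is never clipped at zero, so adding the (nonnegative) window of the last
`D` arrivals to it keeps the real queue's `max 0` inactive; the window slides by one slot per step. -/

open Finset

theorem Finset.sum_Ico_succ_succ_add {M : Type*} [AddCommMonoid M] (f : ℕ → M) {s t : ℕ}
    (hst : s ≤ t) :
    (∑ i ∈ Ico (s + 1) (t + 1), f i) + f s = (∑ i ∈ Ico s t, f i) + f t := by
  rw [← sum_Ico_succ_top hst, sum_eq_sum_Ico_succ_bot (Nat.lt_succ_of_le hst), add_comm]

theorem stmt0_general (D : ℕ) (Q Qe : ℕ → ℝ) (A F : ℕ → NNReal)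
    (hQD : Q D = Qe 0 + ∑ τ ∈ Finset.range D, (A τ : ℝ))
    (hQ : ∀ t, D ≤ t → Q (t + 1) = max 0 (Q t + (A t : ℝ) - (F t : ℝ)))
    (hQe : ∀ t, D ≤ t → Qe (t - D + 1) = Qe (t - D) + (A (t - D) : ℝ) - (F t : ℝ))
    (hQe_nonneg : ∀ t, D ≤ t → 0 ≤ Qe (t - D + 1)) :
    ∀ t, D ≤ t → Q t = Qe (t - D) + ∑ τ ∈ Finset.Ico (t - D) t, (A τ : ℝ) := by
  intro t ht
  induction t, ht using Nat.le_induction with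
  | base => rw [Nat.sub_self, ← range_eq_Ico, hQD]
  | succ t ht ih =>
    have window := sum_Ico_succ_succ_add (fun τ ↦ (A τ : ℝ)) (Nat.sub_le t D)
    have window_nonneg : 0 ≤ ∑ τ ∈ Ico (t - D + 1) (t + 1), (A τ : ℝ) :=
      sum_nonneg fun τ _ ↦ (A τ).coe_nonneg
    have step : Qe (t - D) + (∑ τ ∈ Ico (t - D) t, (A τ : ℝ)) + A t - F t
        = Qe (t - D + 1) + ∑ τ ∈ Ico (t - D + 1) (t + 1), (A τ : ℝ) := by
      linarith [hQe t ht]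
    rw [Nat.sub_add_comm ht, hQ t ht, ih, step, max_eq_right (by linarith [hQe_nonneg t ht])]

/-- Uplink transmitter queue under UT with no service in the first `D` slots:
the real backlog equals the emulated backlog plus the last `D` arrivals. -/
theorem stmt0 (D : ℕ) (hD : 1 ≤ D) (Q Qe : ℕ → ℝ) (A F : ℕ → NNReal)
    (hQD : Q D = Qe 0 + ∑ τ ∈ Finset.range D, (A τ : ℝ))
    (hQ : ∀ t, D ≤ t → Q (t + 1) = max 0 (Q t + (A t : ℝ) - (F t : ℝ)))
    (hQe : ∀ t, D ≤ t → Qe (t - D + 1) = Qe (t - D) + (A (t - D) : ℝ) - (F t : ℝ))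
    (hQe_nonneg : ∀ t, D ≤ t → 0 ≤ Qe (t - D + 1)) :
    ∀ t, D ≤ t → Q t = Qe (t - D) + ∑ τ ∈ Finset.Ico (t - D) t, (A τ : ℝ) :=
  stmt0_general D Q Qe A F hQD hQ hQe hQe_nonneg
end

section
/- In the setting of the previous instability example but under the Universal Tracking algorithm: the emulated queue satisfies Q^e(t) = 0 for all t ≥ 0, hence the controller attempts to serve 10 packets in every slot t ≥ 2, and the real backlog satisfies Q(t) = 20 for all t ≥ 2; in particular the long-run time-average backlog equals 20 and the queue is bounded (stable). -/
/-!
The emulated queue starts empty and, while empty, the threshold policy applied to it serves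
exactly the 10 arriving packets, so it stays empty forever. Hence from slot 2 on the real queue
is served exactly its arrivals, and its backlog freezes at the value 20 it reached during the two
service-free start-up slots; a sequence that is eventually constant is bounded and its Cesàro
averages converge to that constant.
-/

open Finset Filter

open scoped Topology

theorem emulated_queue_eq_zero {Qe F : ℕ → ℝ} (a : ℝ) (he0 : Qe 0 = 0)
    (hF : ∀ s, F (s + 2) = if Qe s + a ≤ a then a else 0)
    (hQe : ∀ s, Qe (s + 1) = Qe s + a - F (s + 2)) (t : ℕ) : Qe t = 0 := by
  induction t with
  | zero => exact he0
  | succ s ih => rw [hQe, hF, ih]; simp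

theorem queue_eq_of_service_eq_arrival {Q F : ℕ → ℝ} {a : ℝ} {n : ℕ}
    (hQ : ∀ t, Q (t + 1) = max 0 (Q t + a - F t)) (hF : ∀ t, n ≤ t → F t = a)
    (hn : 0 ≤ Q n) {t : ℕ} (ht : n ≤ t) : Q t = Q n := by
  induction t, ht using Nat.le_induction with
  | base => rfl
  | succ t ht ih => rw [hQ, hF t ht, add_sub_cancel_right, ih, max_eq_right hn]

/-- Universal Tracking stabilizes the threshold-policy example: the emulated
queue stays at 0, the controller serves 10 packets every slot `t ≥ 2`, the
real backlog equals 20 for all `t ≥ 2`, the queue is bounded, and the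
long-run time-average backlog equals 20. -/
theorem stmt7 (Q Qe F : ℕ → ℝ)
    (h0 : Q 0 = 0) (he0 : Qe 0 = 0)
    (hF0 : F 0 = 0) (hF1 : F 1 = 0)
    (hF : ∀ t, 2 ≤ t → F t = if Qe (t - 2) + 10 ≤ 10 then 10 else 0)
    (hQe : ∀ t, 2 ≤ t → Qe (t - 2 + 1) = Qe (t - 2) + 10 - F t)
    (hQ : ∀ t, Q (t + 1) = max 0 (Q t + 10 - F t)) :
    (∀ t, Qe t = 0) ∧
    (∀ t, 2 ≤ t → F t = 10) ∧
    (∀ t, 2 ≤ t → Q t = 20) ∧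
    (∃ M : ℝ, ∀ t, Q t ≤ M) ∧
    Tendsto (fun T : ℕ => (∑ t ∈ Finset.range T, Q t) / (T : ℝ))
      atTop (nhds 20) := by
  have hQe0 : ∀ t, Qe t = 0 := emulated_queue_eq_zero 10 he0
    (fun s => by simpa only [Nat.add_sub_cancel] using hF (s + 2) (by omega))
    (fun s => by simpa only [Nat.add_sub_cancel] using hQe (s + 2) (by omega))
  have hF10 : ∀ t, 2 ≤ t → F t = 10 := fun t ht => by rw [hF t ht, hQe0]; norm_num
  have hQ2 : Q 2 = 20 := by
    rw [show (2 : ℕ) = 0 + 1 + 1 from rfl, hQ, hQ, h0, hF0, hF1]; norm_num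
  have hQ20 : ∀ t, 2 ≤ t → Q t = 20 := fun t ht => by
    rw [queue_eq_of_service_eq_arrival hQ hF10 (by rw [hQ2]; norm_num) ht, hQ2]
  have hlim : Tendsto Q atTop (𝓝 20) :=
    tendsto_const_nhds.congr' (eventually_atTop.2 ⟨2, fun t ht => (hQ20 t ht).symm⟩)
  obtain ⟨M, hM⟩ := hlim.bddAbove_range
  refine ⟨hQe0, hF10, hQ20, ⟨M, fun t => hM ⟨t, rfl⟩⟩, ?_⟩
  simpa only [div_eq_inv_mul] using hlim.cesaro
end

section
/- Let Q, Q^e : ℕ → ℝ≥0 be queue processes with Q(t) = Q^e(t−D) + ∑_{τ=t−D}^{t−1} A(τ) for all t ≥ D (for some D ≥ 1 and bounded nonnegative arrivals A), with Q(t) bounded for 0 ≤ t < D. If the arrival sequence satisfies limsup_{T→∞} (1/T) ∑_{t=0}^{T−1} A(t) ≤ λ, then limsup_{T→∞} (1/T) ∑_{t=0}^{T−1} Q(t) ≤ limsup_{T→∞} (1/T) ∑_{t=0}^{T−1} Q^e(t) + D·λ. -/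
open Finset Filter

/-- Converting the per-slot gap identity between the real and emulated queues
into a bound on long-run time-average backlogs. -/
theorem stmt8 (D : ℕ) (hD : 1 ≤ D) (Q Qe A : ℕ → ℝ) (lam : ℝ)
    (hQnonneg : ∀ t, 0 ≤ Q t) (hQenonneg : ∀ t, 0 ≤ Qe t)
    (hAnonneg : ∀ t, 0 ≤ A t) (hAbdd : ∃ M : ℝ, ∀ t, A t ≤ M)
    (hgap : ∀ t, D ≤ t → Q t = Qe (t - D) + ∑ τ ∈ Finset.Ico (t - D) t, A τ)
    (hQbdd : ∃ M : ℝ, ∀ t, t < D → Q t ≤ M)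
    (hA : limsup (fun T : ℕ => (∑ t ∈ Finset.range T, A t) / (T : ℝ)) atTop ≤ lam) :
    limsup (fun T : ℕ => (∑ t ∈ Finset.range T, Q t) / (T : ℝ)) atTop ≤
      limsup (fun T : ℕ => (∑ t ∈ Finset.range T, Qe t) / (T : ℝ)) atTop +
        (D : ℝ) * lam := by
  classical
  obtain ⟨M, hM⟩ := hAbdd
  set C : ℝ := ∑ t ∈ Finset.range D, Q t with hCdef
  have hC0 : 0 ≤ C := Finset.sum_nonneg fun t _ => hQnonneg t
  set QA : ℕ → ℝ := fun T : ℕ => (∑ t ∈ Finset.range T, Q t) / (T : ℝ) with hQAdef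
  set QeA : ℕ → ℝ := fun T : ℕ => (∑ t ∈ Finset.range T, Qe t) / (T : ℝ) with hQeAdef
  set AA : ℕ → ℝ := fun T : ℕ => (∑ t ∈ Finset.range T, A t) / (T : ℝ) with hAAdef
  have hQA0 : ∀ T, 0 ≤ QA T := fun T =>
    div_nonneg (Finset.sum_nonneg fun t _ => hQnonneg t) (Nat.cast_nonneg T)
  have hQeA0 : ∀ T, 0 ≤ QeA T := fun T =>
    div_nonneg (Finset.sum_nonneg fun t _ => hQenonneg t) (Nat.cast_nonneg T)
  have hAA0 : ∀ T, 0 ≤ AA T := fun T =>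
    div_nonneg (Finset.sum_nonneg fun t _ => hAnonneg t) (Nat.cast_nonneg T)
  have hAAbdd : ∀ T, AA T ≤ max M 0 := by
    intro T
    rcases Nat.eq_zero_or_pos T with h0 | h1
    · simp [hAAdef, h0, le_max_iff]
    · have hT0 : (0 : ℝ) < T := by exact_mod_cast h1
      have hsum : ∑ t ∈ Finset.range T, A t ≤ (T : ℝ) * M := by
        calc ∑ t ∈ Finset.range T, A t ≤ ∑ _t ∈ Finset.range T, M :=
              Finset.sum_le_sum fun t _ => hM t
          _ = (T : ℝ) * M := by simp [mul_comm]
      have h2 : AA T ≤ M := by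
        rw [hAAdef]
        rw [div_le_iff₀ hT0]
        simpa [mul_comm] using hsum
      exact h2.trans (le_max_left _ _)
  -- the shifted emulated sum is below the real sum
  have key1 : ∀ T : ℕ, ∑ s ∈ Finset.range (T - D), Qe s ≤ ∑ t ∈ Finset.range T, Q t := by
    intro T
    rcases le_or_gt D T with hT | hT
    · have h1 : ∑ s ∈ Finset.range (T - D), Qe s = ∑ t ∈ Finset.Ico D T, Qe (t - D) := by
        rw [Finset.sum_Ico_eq_sum_range]
        exact Finset.sum_congr rfl fun i _ => by congr 1; omega
      rw [h1]
      calc ∑ t ∈ Finset.Ico D T, Qe (t - D) ≤ ∑ t ∈ Finset.Ico D T, Q t := by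
            refine Finset.sum_le_sum fun t ht => ?_
            have h := hgap t (Finset.mem_Ico.mp ht).1
            have hpos : 0 ≤ ∑ τ ∈ Finset.Ico (t - D) t, A τ :=
              Finset.sum_nonneg fun τ _ => hAnonneg τ
            linarith
        _ ≤ ∑ t ∈ Finset.range T, Q t := by
            refine Finset.sum_le_sum_of_subset_of_nonneg ?_ fun i _ _ => hQnonneg i
            intro x hx
            rw [Finset.mem_Ico] at hx
            exact Finset.mem_range.mpr hx.2
    · have h0 : T - D = 0 := by omega
      rw [h0]
      simpa using Finset.sum_nonneg fun t (_ : t ∈ Finset.range T) => hQnonneg t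
  -- the key per-horizon bound
  have key2 : ∀ T : ℕ, D ≤ T → ∑ t ∈ Finset.range T, Q t ≤
      C + ∑ t ∈ Finset.range T, Qe t + (D : ℝ) * ∑ t ∈ Finset.range T, A t := by
    intro T hT
    have hsplit : ∑ t ∈ Finset.range T, Q t = C + ∑ t ∈ Finset.Ico D T, Q t := by
      rw [hCdef, Finset.sum_range_add_sum_Ico Q hT]
    rw [hsplit]
    have hgapsum : ∑ t ∈ Finset.Ico D T, Q t =
        (∑ t ∈ Finset.Ico D T, Qe (t - D)) +
          ∑ t ∈ Finset.Ico D T, ∑ τ ∈ Finset.Ico (t - D) t, A τ := by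
      rw [← Finset.sum_add_distrib]
      exact Finset.sum_congr rfl fun t ht => hgap t (Finset.mem_Ico.mp ht).1
    have e1 : ∑ t ∈ Finset.Ico D T, Qe (t - D) ≤ ∑ t ∈ Finset.range T, Qe t := by
      have h1 : ∑ t ∈ Finset.Ico D T, Qe (t - D) = ∑ s ∈ Finset.range (T - D), Qe s := by
        rw [Finset.sum_Ico_eq_sum_range]
        exact Finset.sum_congr rfl fun i _ => by congr 1; omega
      rw [h1]
      refine Finset.sum_le_sum_of_subset_of_nonneg ?_ fun i _ _ => hQenonneg i
      exact Finset.range_subset_range.mpr (by omega)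
    have e2 : ∑ t ∈ Finset.Ico D T, ∑ τ ∈ Finset.Ico (t - D) t, A τ ≤
        (D : ℝ) * ∑ t ∈ Finset.range T, A t := by
      have h1 : ∀ t ∈ Finset.Ico D T, ∑ τ ∈ Finset.Ico (t - D) t, A τ =
          ∑ j ∈ Finset.range D, A (t - D + j) := by
        intro t ht
        have htD : D ≤ t := (Finset.mem_Ico.mp ht).1
        rw [Finset.sum_Ico_eq_sum_range, show t - (t - D) = D from by omega]
      rw [Finset.sum_congr rfl h1, Finset.sum_comm]
      have h2 : ∀ j ∈ Finset.range D, ∑ t ∈ Finset.Ico D T, A (t - D + j) ≤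
          ∑ τ ∈ Finset.range T, A τ := by
        intro j hj
        have hj' : j < D := Finset.mem_range.mp hj
        have h3 : ∑ t ∈ Finset.Ico D T, A (t - D + j) = ∑ τ ∈ Finset.Ico j (T - D + j), A τ := by
          rw [Finset.sum_Ico_eq_sum_range, Finset.sum_Ico_eq_sum_range,
            show T - D + j - j = T - D from by omega]
          exact Finset.sum_congr rfl fun i _ => by congr 1; omega
        rw [h3]
        refine Finset.sum_le_sum_of_subset_of_nonneg ?_ fun i _ _ => hAnonneg i
        intro x hx
        rw [Finset.mem_Ico] at hx
        rw [Finset.mem_range]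
        omega
      calc ∑ j ∈ Finset.range D, ∑ t ∈ Finset.Ico D T, A (t - D + j)
          ≤ ∑ _j ∈ Finset.range D, ∑ τ ∈ Finset.range T, A τ := Finset.sum_le_sum h2
        _ = (D : ℝ) * ∑ τ ∈ Finset.range T, A τ := by
            rw [Finset.sum_const, Finset.card_range, nsmul_eq_mul]
    linarith [hgapsum, e1, e2]
  -- the average inequality
  have havg : ∀ T : ℕ, D ≤ T → QA T ≤ QeA T + (C / T + (D : ℝ) * AA T) := by
    intro T hT
    have hT1 : 1 ≤ T := le_trans hD hT
    have hT0 : (0 : ℝ) < T := by exact_mod_cast hT1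
    have h := key2 T hT
    have hdiv : QA T ≤
        (C + ∑ t ∈ Finset.range T, Qe t + (D : ℝ) * ∑ t ∈ Finset.range T, A t) / T := by
      show (∑ t ∈ Finset.range T, Q t) / (T : ℝ) ≤ _
      gcongr
    refine hdiv.trans (le_of_eq ?_)
    simp only [hQeAdef, hAAdef]
    field_simp
    ring
  -- boundedness facts for the correction term
  have hCdiv_le : ∀ T : ℕ, C / T ≤ C := by
    intro T
    rcases Nat.eq_zero_or_pos T with h0 | h1
    · simp [h0, hC0]
    · exact div_le_self hC0 (by exact_mod_cast h1)
  have hCdiv0 : ∀ T : ℕ, 0 ≤ C / T := fun T => div_nonneg hC0 (Nat.cast_nonneg T)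
  set G : ℕ → ℝ := fun T => C / T + (D : ℝ) * AA T with hGdef
  have hG0 : ∀ T, 0 ≤ G T := fun T =>
    add_nonneg (hCdiv0 T) (mul_nonneg (Nat.cast_nonneg D) (hAA0 T))
  have hGbdd : ∀ T, G T ≤ C + (D : ℝ) * max M 0 := fun T =>
    add_le_add (hCdiv_le T) (mul_le_mul_of_nonneg_left (hAAbdd T) (Nat.cast_nonneg D))
  have hlam0 : 0 ≤ lam := by
    refine le_trans ?_ hA
    refine le_limsup_of_frequently_le (Frequently.of_forall hAA0) ?_
    exact ⟨max M 0, eventually_map.mpr (Eventually.of_forall hAAbdd)⟩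
  have hGlimsup : limsup G atTop ≤ (D : ℝ) * lam := by
    have h1 : limsup (fun T : ℕ => C / T) atTop = 0 :=
      (tendsto_const_div_atTop_nhds_zero_nat C).limsup_eq
    have h2 : limsup (fun T : ℕ => (D : ℝ) * AA T) atTop ≤ (D : ℝ) * lam := by
      have hm : limsup ((fun _ : ℕ => (D : ℝ)) * AA) atTop ≤
          limsup (fun _ : ℕ => (D : ℝ)) atTop * limsup AA atTop :=
        limsup_mul_le (Eventually.of_forall fun _ => Nat.cast_nonneg D).frequently
          ⟨(D : ℝ), eventually_map.mpr (Eventually.of_forall fun _ => le_rfl)⟩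
          (Eventually.of_forall hAA0)
          ⟨max M 0, eventually_map.mpr (Eventually.of_forall hAAbdd)⟩
      have hc : limsup (fun _ : ℕ => (D : ℝ)) atTop = (D : ℝ) := limsup_const _
      calc limsup (fun T : ℕ => (D : ℝ) * AA T) atTop
          = limsup ((fun _ : ℕ => (D : ℝ)) * AA) atTop := rfl
        _ ≤ limsup (fun _ : ℕ => (D : ℝ)) atTop * limsup AA atTop := hm
        _ = (D : ℝ) * limsup AA atTop := by rw [hc]
        _ ≤ (D : ℝ) * lam := mul_le_mul_of_nonneg_left hA (Nat.cast_nonneg D)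
    calc limsup G atTop
        = limsup ((fun T : ℕ => C / T) + fun T : ℕ => (D : ℝ) * AA T) atTop := rfl
      _ ≤ limsup (fun T : ℕ => C / T) atTop + limsup (fun T : ℕ => (D : ℝ) * AA T) atTop := by
          refine limsup_add_le
            ⟨0, eventually_map.mpr (Eventually.of_forall hCdiv0)⟩
            ⟨C, eventually_map.mpr (Eventually.of_forall hCdiv_le)⟩
            (IsBoundedUnder.isCoboundedUnder_le
              ⟨0, eventually_map.mpr (Eventually.of_forall fun T =>
                mul_nonneg (Nat.cast_nonneg D) (hAA0 T))⟩)
            ⟨(D : ℝ) * max M 0, eventually_map.mpr (Eventually.of_forall fun T =>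
              mul_le_mul_of_nonneg_left (hAAbdd T) (Nat.cast_nonneg D))⟩
      _ ≤ (D : ℝ) * lam := by rw [h1, zero_add]; exact h2
  by_cases hbdd : IsBoundedUnder (· ≤ ·) atTop QeA
  · obtain ⟨B, hB⟩ := hbdd
    have hBev : ∀ᶠ T in atTop, QeA T ≤ B := eventually_map.mp hB
    have step1 : limsup QA atTop ≤ limsup (QeA + G) atTop := by
      refine limsup_le_limsup ?_ ?_ ?_
      · filter_upwards [eventually_ge_atTop D] with T hT
        exact havg T hT
      · exact IsBoundedUnder.isCoboundedUnder_le
          ⟨0, eventually_map.mpr (Eventually.of_forall hQA0)⟩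
      · exact ⟨B + (C + (D : ℝ) * max M 0), eventually_map.mpr
          (hBev.mono fun T hT => add_le_add hT (hGbdd T))⟩
    have step2 : limsup (QeA + G) atTop ≤ limsup QeA atTop + limsup G atTop := by
      refine limsup_add_le
        ⟨0, eventually_map.mpr (Eventually.of_forall hQeA0)⟩
        ⟨B, hB⟩
        (IsBoundedUnder.isCoboundedUnder_le
          ⟨0, eventually_map.mpr (Eventually.of_forall hG0)⟩)
        ⟨C + (D : ℝ) * max M 0, eventually_map.mpr (Eventually.of_forall hGbdd)⟩
    calc limsup QA atTop ≤ limsup (QeA + G) atTop := step1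
      _ ≤ limsup QeA atTop + limsup G atTop := step2
      _ ≤ limsup QeA atTop + (D : ℝ) * lam := add_le_add le_rfl hGlimsup
  · -- unbounded case: both limsups are the junk value `sInf ∅ = 0`
    have hQA_unbdd : ¬ IsBoundedUnder (· ≤ ·) atTop QA := by
      rintro ⟨a, ha⟩
      apply hbdd
      have ha' : ∀ᶠ T in atTop, QA T ≤ a := eventually_map.mp ha
      obtain ⟨N, hN⟩ := eventually_atTop.mp ha'
      refine ⟨max a 0 * (1 + D), eventually_map.mpr (eventually_atTop.mpr
        ⟨N + 1, fun S hS => ?_⟩)⟩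
      have hS1 : 1 ≤ S := by omega
      have hS0 : (0 : ℝ) < S := by exact_mod_cast hS1
      have hSD : N ≤ S + D := by omega
      have h1 : QA (S + D) ≤ max a 0 := (hN (S + D) hSD).trans (le_max_left _ _)
      have h2 : ∑ s ∈ Finset.range S, Qe s ≤ ∑ t ∈ Finset.range (S + D), Q t := by
        have h := key1 (S + D)
        rwa [show S + D - D = S from by omega] at h
      have hSD0 : (0 : ℝ) < ((S + D : ℕ) : ℝ) := by positivity
      have h3 : ∑ t ∈ Finset.range (S + D), Q t ≤ max a 0 * ((S : ℝ) + D) := by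
        rw [hQAdef, div_le_iff₀ hSD0] at h1
        calc ∑ t ∈ Finset.range (S + D), Q t ≤ max a 0 * ((S + D : ℕ) : ℝ) := h1
          _ = max a 0 * ((S : ℝ) + D) := by push_cast; ring
      have h5 : (S : ℝ) + D ≤ (1 + D) * S := by
        have hS1' : (1 : ℝ) ≤ S := by exact_mod_cast hS1
        have hD0 : (0 : ℝ) ≤ D := Nat.cast_nonneg D
        nlinarith
      have ha0 : (0 : ℝ) ≤ max a 0 := le_max_right a 0
      show (∑ s ∈ Finset.range S, Qe s) / (S : ℝ) ≤ max a 0 * (1 + (D : ℝ))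
      rw [div_le_iff₀ hS0]
      calc ∑ s ∈ Finset.range S, Qe s ≤ max a 0 * ((S : ℝ) + D) := h2.trans h3
        _ ≤ max a 0 * ((1 + D) * S) := mul_le_mul_of_nonneg_left h5 ha0
        _ = max a 0 * (1 + D) * S := by ring
    have hempty : ∀ (f : ℕ → ℝ), ¬ IsBoundedUnder (· ≤ ·) atTop f →
        limsup f atTop = 0 := by
      intro f hf
      rw [limsup_eq]
      convert Real.sInf_empty using 2
      · rfl
      rw [Set.eq_empty_iff_forall_notMem]
      intro a ha
      exact hf ⟨a, eventually_map.mpr ha⟩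
    rw [hempty QA hQA_unbdd, hempty QeA hbdd]
    have : (0 : ℝ) ≤ (D : ℝ) * lam := mul_nonneg (Nat.cast_nonneg D) hlam0
    linarith
end

section
/- Let D ≥ 1, let A, F : ℕ → ℝ≥0, and let Q, Q^e : ℕ → ℝ satisfy: for all t ≥ D, Q(t+1) = max(0, Q(t) + A(t) − F(t)) and Q^e(t−D+1) = Q^e(t−D) + A(t−D) − F(t) with Q^e nonnegative. Suppose at time t₀ ≥ D we have F(t₀) ≥ Q(t₀) + A(t₀) (so Q(t₀+1) = 0). Then for any t₁ > t₀ such that Q(t) > 0 for all t₀+1 < t ≤ t₁ (or trivially if t₁ = t₀+1), we have Q(t+1) ≤ Q^e(t−D+1) + ∑_{τ=t₀+1}^{t} (A(τ) − A(τ−D)) for all t₀ ≤ t < t₁. -/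
/-!
Strictly after the emptying time the real queue stays positive, so the `max 0` in its Lindley
recursion is inactive and the real and emulated queues receive the same service `F t`. Hence the
gap `Q t - Qe (t - D)` grows by exactly `A t - A (t - D)` per slot, and telescoping from
`Q (t₀ + 1) = 0` leaves `-Qe (t₀ + 1 - D) ≤ 0` as the initial gap.
-/

open Finset

lemma eq_of_eq_max_zero_of_pos {α : Type*} [LinearOrder α] [Zero α] {a x : α}
    (h : a = max 0 x) (ha : 0 < a) : a = x := by
  rw [h] at ha ⊢
  exact max_eq_right (lt_max_iff.mp ha |>.resolve_left (lt_irrefl 0)).le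

lemma queue_sub_emulated_succ {D t : ℕ} {A F Q Qe : ℕ → ℝ} (hDt : D ≤ t)
    (hQ : Q (t + 1) = max 0 (Q t + A t - F t))
    (hQe : Qe (t - D + 1) = Qe (t - D) + A (t - D) - F t) (hpos : 0 < Q (t + 1)) :
    (Q (t + 1) - Qe (t + 1 - D)) - (Q t - Qe (t - D)) = A t - A (t - D) := by
  rw [eq_of_eq_max_zero_of_pos hQ hpos, Nat.sub_add_comm hDt, hQe]
  ring

theorem stmt9_general (D : ℕ) (A F : ℕ → ℝ) (Q Qe : ℕ → ℝ)
    (hQenonneg : ∀ t, 0 ≤ Qe t)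
    (hQ : ∀ t, D ≤ t → Q (t + 1) = max 0 (Q t + A t - F t))
    (hQe : ∀ t, D ≤ t → Qe (t - D + 1) = Qe (t - D) + A (t - D) - F t)
    (t₀ t₁ : ℕ) (ht₀ : D ≤ t₀)
    (hempty : Q t₀ + A t₀ ≤ F t₀)
    (hpos : ∀ t, t₀ + 1 < t → t ≤ t₁ → 0 < Q t) :
    ∀ t, t₀ ≤ t → t < t₁ →
      Q (t + 1) ≤ Qe (t - D + 1) +
        ∑ τ ∈ Finset.Icc (t₀ + 1) t, (A τ - A (τ - D)) := by
  intro t ht₀t htt₁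
  have hQ₀ : Q (t₀ + 1) = 0 := by
    rw [hQ t₀ ht₀]
    exact max_eq_left (by linarith)
  have hstep : ∀ τ ∈ Ico (t₀ + 1) (t + 1),
      A τ - A (τ - D) = (Q (τ + 1) - Qe (τ + 1 - D)) - (Q τ - Qe (τ - D)) := by
    intro τ hτ
    rw [mem_Ico] at hτ
    exact (queue_sub_emulated_succ (by omega) (hQ τ (by omega)) (hQe τ (by omega))
      (hpos (τ + 1) (by omega) (by omega))).symm
  rw [← Ico_add_one_right_eq_Icc, sum_congr rfl hstep,
    sum_Ico_sub (fun s => Q s - Qe (s - D)) (by omega), hQ₀, Nat.sub_add_comm (ht₀.trans ht₀t)]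
  linarith [hQenonneg (t₀ + 1 - D)]

/-- Key step in the proof of Theorem 2: after the real queue empties, on any
interval where it stays positive the real-minus-emulated gap is bounded by the
telescoping sum of arrival differences. -/
theorem stmt9 (D : ℕ) (hD : 1 ≤ D) (A F : ℕ → ℝ) (Q Qe : ℕ → ℝ)
    (hA : ∀ t, 0 ≤ A t) (hF : ∀ t, 0 ≤ F t)
    (hQenonneg : ∀ t, 0 ≤ Qe t)
    (hQ : ∀ t, D ≤ t → Q (t + 1) = max 0 (Q t + A t - F t))
    (hQe : ∀ t, D ≤ t → Qe (t - D + 1) = Qe (t - D) + A (t - D) - F t)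
    (t₀ t₁ : ℕ) (ht₀ : D ≤ t₀) (ht₀t₁ : t₀ < t₁)
    (hempty : Q t₀ + A t₀ ≤ F t₀)
    (hpos : ∀ t, t₀ + 1 < t → t ≤ t₁ → 0 < Q t) :
    ∀ t, t₀ ≤ t → t < t₁ →
      Q (t + 1) ≤ Qe (t - D + 1) +
        ∑ τ ∈ Finset.Icc (t₀ + 1) t, (A τ - A (τ - D)) :=
  stmt9_general D A F Q Qe hQenonneg hQ hQe t₀ t₁ ht₀ hempty hpos
end

section
/- Let D ≥ 1 and let Q, Q^e : ℕ → ℝ≥0, F_in, F_out : ℕ → ℝ≥0 satisfy for all t ≥ D: Q(t+1) = max(0, Q(t) + F_in(t) − F_out(t)), Q^e(t−D+1) = Q^e(t−D) + F_in(t) − F_out(t) with Q^e ≥ 0, and initially Q(D) = Q^e(0) + G where G := ∑_{τ=0}^{D−1}(F̃_in(τ) − F̃_out(τ)) ≥ 0 is the net inflow during the first D slots. If t₁ ≥ D is the first time t ≥ D at which F_out(t) ≥ Q(t) + F_in(t) (so the queue empties at t₁+1), then Q(t) = Q^e(t−D) + G for all D ≤ t ≤ t₁, and Q(t) ≤ Q^e(t−D)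 for all t > t₁. -/
/-!
Write `a t = F_in t - F_out t` for the net arrivals, so that the real queue follows the Lindley
recursion `Q (t + 1) = max 0 (Q t + a t)` and the emulated queue `P t = Q^e (t - D)` the free
recursion `P (t + 1) = P t + a t`. As long as the queue does not empty the `max` is inactive and
the two recursions agree, so the offset `G` is preserved. At the emptying time the real queue
drops to `0 ≤ P`, and from then on `Q ≤ P` propagates, since both `0` and `Q t + a t` are bounded
by `P (t + 1)`.
-/

section Lindley

variable {Q P a : ℕ → ℝ} {m : ℕ}

theorem lindley_eq_add_of_forall_pos (hQ : ∀ t, m ≤ t → Q (t + 1) = max 0 (Q t + a t))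
    (hP : ∀ t, m ≤ t → P (t + 1) = P t + a t) {c : ℝ} (hm : Q m = P m + c) {n : ℕ}
    (hmn : m ≤ n) (hpos : ∀ t, m ≤ t → t < n → 0 < Q t + a t) : Q n = P n + c := by
  induction n, hmn using Nat.le_induction with
  | base => exact hm
  | succ n hmn ih =>
    have hn : Q n = P n + c := ih fun t hmt htn => hpos t hmt (htn.trans n.lt_succ_self)
    rw [hQ n hmn, max_eq_right (hpos n hmn n.lt_succ_self).le, hP n hmn, hn]
    ring

theorem lindley_le_of_le (hQ : ∀ t, m ≤ t → Q (t + 1) = max 0 (Q t + a t))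
    (hP : ∀ t, m ≤ t → P (t + 1) = P t + a t) (hP₀ : ∀ t, 0 ≤ P t) {s : ℕ} (hms : m ≤ s)
    (hs : Q s ≤ P s) {n : ℕ} (hsn : s ≤ n) : Q n ≤ P n := by
  induction n, hsn using Nat.le_induction with
  | base => exact hs
  | succ n hsn ih =>
    have hmn : m ≤ n := hms.trans hsn
    rw [hQ n hmn]
    exact max_le (hP₀ _) (by rw [hP n hmn]; linarith)

end Lindley

theorem stmt10_general (D : ℕ) (Q Qe Fin' Fout : ℕ → ℝ)
    (hQenonneg : ∀ t, 0 ≤ Qe t)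
    (hQ : ∀ t, D ≤ t → Q (t + 1) = max 0 (Q t + Fin' t - Fout t))
    (hQe : ∀ t, D ≤ t → Qe (t - D + 1) = Qe (t - D) + Fin' t - Fout t)
    (G : ℝ)
    (hinit : Q D = Qe 0 + G)
    (t₁ : ℕ) (ht₁ : D ≤ t₁)
    (hfirst : Q t₁ + Fin' t₁ ≤ Fout t₁ ∧
      ∀ t, D ≤ t → t < t₁ → Fout t < Q t + Fin' t) :
    (∀ t, D ≤ t → t ≤ t₁ → Q t = Qe (t - D) + G) ∧
    (∀ t, t₁ < t → Q t ≤ Qe (t - D)) := by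
  obtain ⟨hempty, hbusy⟩ := hfirst
  have hLindley : ∀ t, D ≤ t → Q (t + 1) = max 0 (Q t + (Fin' t - Fout t)) := fun t ht => by
    rw [hQ t ht, add_sub_assoc]
  have hFree : ∀ t, D ≤ t → Qe (t + 1 - D) = Qe (t - D) + (Fin' t - Fout t) := fun t ht => by
    rw [Nat.sub_add_comm ht, hQe t ht, add_sub_assoc]
  refine ⟨fun t hDt htt₁ => ?_, fun t ht => ?_⟩
  · refine lindley_eq_add_of_forall_pos (P := fun t => Qe (t - D)) hLindley hFree
      (by simpa using hinit) hDt fun s hDs hst => ?_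
    linarith [hbusy s hDs (hst.trans_le htt₁)]
  · have hzero : Q (t₁ + 1) = 0 := by
      rw [hLindley t₁ ht₁, max_eq_left (by linarith)]
    exact lindley_le_of_le (P := fun t => Qe (t - D)) hLindley hFree (fun _ => hQenonneg _)
      (ht₁.trans t₁.le_succ) (hzero.trans_le (hQenonneg _)) ht

/-- Receiver queues under UT with arbitrary initial actions: until the first
emptying time the real queue exceeds the emulated queue by exactly the net
inflow `G` of the first `D` slots, and after the emptying time the real queue
is dominated by the emulated queue. -/
theorem stmt10 (D : ℕ) (hD : 1 ≤ D) (Q Qe Fin' Fout Ftin Ftout : ℕ → ℝ)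
    (hQnonneg : ∀ t, 0 ≤ Q t) (hQenonneg : ∀ t, 0 ≤ Qe t)
    (hFin : ∀ t, 0 ≤ Fin' t) (hFout : ∀ t, 0 ≤ Fout t)
    (hQ : ∀ t, D ≤ t → Q (t + 1) = max 0 (Q t + Fin' t - Fout t))
    (hQe : ∀ t, D ≤ t → Qe (t - D + 1) = Qe (t - D) + Fin' t - Fout t)
    (G : ℝ) (hG : G = ∑ τ ∈ Finset.range D, (Ftin τ - Ftout τ)) (hGpos : 0 ≤ G)
    (hinit : Q D = Qe 0 + G)
    (t₁ : ℕ) (ht₁ : D ≤ t₁)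
    (hfirst : Q t₁ + Fin' t₁ ≤ Fout t₁ ∧
      ∀ t, D ≤ t → t < t₁ → Fout t < Q t + Fin' t) :
    (∀ t, D ≤ t → t ≤ t₁ → Q t = Qe (t - D) + G) ∧
    (∀ t, t₁ < t → Q t ≤ Qe (t - D)) :=
  stmt10_general D Q Qe Fin' Fout hQenonneg hQ hQe G hinit t₁ ht₁ hfirst
end

section
/- Let Q : ℕ → ℝ≥0 satisfy the Lindley recursion Q(t+1) = max(0, Q(t) + a(t) − f(t)) with a, f ≥ 0 and Q(0) = 0. Define for each t the 'time to empty' d(t) := min{s ≥ 0 : Q(t+s) = 0} (assumed finite) and suppose the queue empties infinitely often. Then for any D ≥ 1, ∑_{t=D}^{T−1} [Q(t) − Q'(t)] where Q'(t) := Q(t) computed with arrivals shifted a'(τ) = a(τ−D), satisfies: each arrival a(t) contributes to the gap for at most min(D, d(t)) slots; formally, if Q(t) = Q'(t) + ∑_{τ=t−D}^{t−1} a(τ) holds on each maximal positive excursion of Q, then ∑_{t=D}^{T−1} (Q(t) − Q'(t)) ≤ ∑_{t=0}^{T−1} min(D, d(t+1))·a(t). -/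
/-!
A slot `t` with `Q t > 0` is charged the arrivals of the window `[t - D, t)`. If the queue
empties at some `r` inside that window, the Lindley recursion gives `Q t ≤ ∑_{[r, t)} a`, which
forces every arrival of the window before `r` to vanish. So a nonzero arrival `a τ` is charged
only to slots `t` with `τ < t ≤ τ + min D (d (τ + 1))`, and exchanging the order of summation
counts it at most `min D (d (τ + 1))` times.
-/

open Finset

theorem sum_sum_filter_le_sum_mul (a : ℕ → ℝ) (ha : ∀ τ, 0 ≤ a τ) (L : ℕ → ℕ) (T : ℕ) :
    ∑ t ∈ range T, ∑ τ ∈ range t with t ≤ τ + L τ, a τ ≤ ∑ τ ∈ range T, (L τ : ℝ) * a τ := by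
  rw [sum_comm' (t' := range T) (s' := fun τ ↦ {t ∈ range T | τ < t ∧ t ≤ τ + L τ})
    (fun t τ ↦ by simp only [mem_filter, mem_range]; omega)]
  refine sum_le_sum fun τ _ ↦ ?_
  rw [sum_const, nsmul_eq_mul]
  gcongr
  · exact ha τ
  calc #{t ∈ range T | τ < t ∧ t ≤ τ + L τ} ≤ #(Ioc τ (τ + L τ)) :=
        card_le_card fun t ht ↦ by simp only [mem_filter, mem_Ioc] at ht ⊢; omega
    _ = L τ := by rw [Nat.card_Ioc, Nat.add_sub_cancel_left]

section Lindley

variable {Q a f : ℕ → ℝ}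

theorem lindley_nonneg (h0 : 0 ≤ Q 0) (hQ : ∀ t, Q (t + 1) = max 0 (Q t + a t - f t)) (t : ℕ) :
    0 ≤ Q t := by
  cases t with
  | zero => exact h0
  | succ t => exact hQ t ▸ le_max_left _ _

theorem lindley_le_add_sum (ha : ∀ t, 0 ≤ a t) (hf : ∀ t, 0 ≤ f t) (hQnonneg : ∀ t, 0 ≤ Q t)
    (hQ : ∀ t, Q (t + 1) = max 0 (Q t + a t - f t)) {r s : ℕ} (hrs : r ≤ s) :
    Q s ≤ Q r + ∑ τ ∈ Ico r s, a τ := by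
  have hstep : ∀ τ, Q (τ + 1) - Q τ ≤ a τ := fun τ ↦ by
    rw [hQ τ, sub_le_iff_le_add, max_le_iff]
    exact ⟨by linarith [hQnonneg τ, ha τ], by linarith [hf τ]⟩
  have := sum_le_sum fun τ (_ : τ ∈ Ico r s) ↦ hstep τ
  rw [sum_Ico_sub Q hrs] at this
  linarith

theorem arrival_eq_zero_of_empty_in_window {Q' : ℕ → ℝ} {D t r τ : ℕ} (ha : ∀ t, 0 ≤ a t)
    (hgrow : Q t ≤ Q r + ∑ τ ∈ Ico r t, a τ) (hQr : Q r = 0) (hQ't : 0 ≤ Q' t)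
    (hgap : Q t = Q' t + ∑ τ ∈ Ico (t - D) t, a τ)
    (hτ : t - D ≤ τ) (hτr : τ < r) (hrt : r ≤ t) : a τ = 0 := by
  rw [← sum_Ico_consecutive a (hτ.trans hτr.le) hrt] at hgap
  have hle : a τ ≤ ∑ σ ∈ Ico (t - D) r, a σ :=
    single_le_sum (fun σ _ ↦ ha σ) (mem_Ico.mpr ⟨hτ, hτr⟩)
  linarith [ha τ]

theorem gap_le_sum_charged {Q' : ℕ → ℝ} {d : ℕ → ℕ} {D t : ℕ} (ha : ∀ t, 0 ≤ a t)
    (hf : ∀ t, 0 ≤ f t) (hQnonneg : ∀ t, 0 ≤ Q t) (hQ : ∀ t, Q (t + 1) = max 0 (Q t + a t - f t))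
    (hd_empty : ∀ t, Q (t + d t) = 0) (hQ't : 0 ≤ Q' t)
    (hgap : 0 < Q t → Q t = Q' t + ∑ τ ∈ Ico (t - D) t, a τ) :
    Q t - Q' t ≤ ∑ τ ∈ range t with t ≤ τ + min D (d (τ + 1)), a τ := by
  rcases (hQnonneg t).eq_or_lt with hQt | hQt
  · rw [← hQt, zero_sub]
    exact (neg_nonpos.mpr hQ't).trans (sum_nonneg fun τ _ ↦ ha τ)
  have hwindow : Ico (t - D) t = {τ ∈ range t | t ≤ τ + D} := by
    ext τ; simp only [mem_Ico, mem_filter, mem_range]; omega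
  have hlate : ∀ τ ∈ Ico (t - D) t, a τ ≠ 0 → t ≤ τ + d (τ + 1) := by
    intro τ hτ haτ
    by_contra! hearly
    have hrt : τ + 1 + d (τ + 1) ≤ t := by omega
    exact haτ <| arrival_eq_zero_of_empty_in_window ha
      (lindley_le_add_sum ha hf hQnonneg hQ hrt) (hd_empty (τ + 1)) hQ't
      (hgap hQt) (mem_Ico.mp hτ).1 (by omega) hrt
  rw [hgap hQt, add_sub_cancel_left, ← sum_filter_of_ne hlate, hwindow, filter_filter]
  exact (sum_congr (filter_congr fun τ _ ↦ by omega) fun _ _ ↦ rfl).le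

end Lindley

theorem stmt14_general (D : ℕ) (Q Q' a f : ℕ → ℝ) (d : ℕ → ℕ)
    (ha : ∀ t, 0 ≤ a t) (hf : ∀ t, 0 ≤ f t)
    (hQ'nonneg : ∀ t, 0 ≤ Q' t)
    (h0 : Q 0 = 0)
    (hQ : ∀ t, Q (t + 1) = max 0 (Q t + a t - f t))
    (hd_empty : ∀ t, Q (t + d t) = 0)
    (hgap : ∀ t, D ≤ t → 0 < Q t →
      Q t = Q' t + ∑ τ ∈ Finset.Ico (t - D) t, a τ) :
    ∀ T : ℕ, ∑ t ∈ Finset.Ico D T, (Q t - Q' t) ≤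
      ∑ t ∈ Finset.range T, (min D (d (t + 1)) : ℝ) * a t := by
  intro T
  have hQnonneg := lindley_nonneg h0.ge hQ
  have hcharge : ∀ t, D ≤ t → Q t - Q' t ≤ ∑ τ ∈ range t with t ≤ τ + min D (d (τ + 1)), a τ :=
    fun t hDt ↦ gap_le_sum_charged ha hf hQnonneg hQ hd_empty (hQ'nonneg t) (hgap t hDt)
  calc ∑ t ∈ Ico D T, (Q t - Q' t)
      ≤ ∑ t ∈ Ico D T, ∑ τ ∈ range t with t ≤ τ + min D (d (τ + 1)), a τ :=
        sum_le_sum fun t ht ↦ hcharge t (mem_Ico.mp ht).1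
    _ ≤ ∑ t ∈ range T, ∑ τ ∈ range t with t ≤ τ + min D (d (τ + 1)), a τ :=
        sum_le_sum_of_subset_of_nonneg (fun t ht ↦ mem_range.mpr (mem_Ico.mp ht).2)
          fun t _ _ ↦ sum_nonneg fun τ _ ↦ ha τ
    _ ≤ ∑ t ∈ range T, (min D (d (t + 1)) : ℝ) * a t := by
        simpa only [Nat.cast_min] using
          sum_sum_filter_le_sum_mul a ha (fun τ ↦ min D (d (τ + 1))) T

/-- Accounting lemma: if on positive excursions the real queue leads the
delayed-arrival queue by the last `D` arrivals, then each arrival `a t`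
contributes to the accumulated gap for at most `min D (d (t+1))` slots,
where `d t` is the residual time until the queue next empties. -/
theorem stmt14 (D : ℕ) (hD : 1 ≤ D) (Q Q' a f : ℕ → ℝ) (d : ℕ → ℕ)
    (ha : ∀ t, 0 ≤ a t) (hf : ∀ t, 0 ≤ f t)
    (hQ'nonneg : ∀ t, 0 ≤ Q' t)
    (h0 : Q 0 = 0)
    (hQ : ∀ t, Q (t + 1) = max 0 (Q t + a t - f t))
    (hd_empty : ∀ t, Q (t + d t) = 0)
    (hd_min : ∀ t s, Q (t + s) = 0 → d t ≤ s)
    (hgap : ∀ t, D ≤ t → 0 < Q t →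
      Q t = Q' t + ∑ τ ∈ Finset.Ico (t - D) t, a τ) :
    ∀ T : ℕ, ∑ t ∈ Finset.Ico D T, (Q t - Q' t) ≤
      ∑ t ∈ Finset.range T, (min D (d (t + 1)) : ℝ) * a t :=
  stmt14_general D Q Q' a f d ha hf hQ'nonneg h0 hQ hd_empty hgap
end
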